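/- If the BiSE bias condition for dilation is strict and the scaling p > 0, then an activated BiSE maps almost binary images to almost binary images: given ∑_{s∈Ω∖S}W(s) + u∑_{s∈S}W(s) ≤ b < v·min_{s∈S}W(s), for every almost binary x with bounds (u,v) the output y(i) = ξ(p(∑_s W(s)x(i−s) − b)) takes values in [0, ξ(p(∑_{Ω∖S}W + u∑_S W − b))] ∪ [ξ(p(v·min_{s∈S}W(s) − b)), 1], where ξ(t) = (tanh(t)+1)/2, and the lower bound of the second interval strictly exceeds ξ(0) = 1/2 while the upper bound of the first interval is at most 1/2. -/
import Mathlib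

lemma tanh_eq' (x : ℝ) : Real.tanh x = (Real.exp (2*x) - 1) / (Real.exp (2*x) + 1) := by
  rw [Real.tanh_eq_sinh_div_cosh, Real.sinh_eq, Real.cosh_eq]
  have h1 : Real.exp (2*x) = Real.exp x * Real.exp x := by
    rw [two_mul, Real.exp_add]
  have h2 : Real.exp (-x) = (Real.exp x)⁻¹ := Real.exp_neg x
  have h3 : Real.exp x ≠ 0 := (Real.exp_pos x).ne'
  have h4 : Real.exp x * Real.exp x + 1 ≠ 0 := by positivity
  rw [h1, h2]
  field_simp

/-- The smooth threshold ξ(t) = ½ tanh t + ½. -/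
noncomputable def xiFun (t : ℝ) : ℝ := Real.tanh t / 2 + 1 / 2

lemma xiFun_eq (t : ℝ) : xiFun t = 1 - 1 / (Real.exp (2*t) + 1) := by
  have h4 : Real.exp (2*t) + 1 ≠ 0 := by positivity
  rw [xiFun, tanh_eq']
  field_simp
  ring

lemma xiFun_mono : Monotone xiFun := by
  intro a c h
  simp only [xiFun_eq]
  have : Real.exp (2*a) + 1 ≤ Real.exp (2*c) + 1 := by
    have := Real.exp_le_exp.2 (by linarith : 2*a ≤ 2*c); linarith
  have ha : (0:ℝ) < Real.exp (2*a) + 1 := by positivity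
  have := one_div_le_one_div_of_le ha this
  linarith

lemma xiFun_strictMono : StrictMono xiFun := by
  intro a c h
  simp only [xiFun_eq]
  have : Real.exp (2*a) + 1 < Real.exp (2*c) + 1 := by
    have := Real.exp_lt_exp.2 (by linarith : 2*a < 2*c); linarith
  have ha : (0:ℝ) < Real.exp (2*a) + 1 := by positivity
  have := one_div_lt_one_div_of_lt ha this
  linarith

lemma xiFun_nonneg (t : ℝ) : 0 ≤ xiFun t := by
  rw [xiFun_eq]
  have h : (0:ℝ) < Real.exp (2*t) + 1 := by positivity
  have : 1 / (Real.exp (2*t) + 1) ≤ 1 := by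
    rw [div_le_one h]; have := Real.exp_pos (2*t); linarith
  linarith

lemma xiFun_le_one (t : ℝ) : xiFun t ≤ 1 := by
  rw [xiFun_eq]
  have : 0 < 1 / (Real.exp (2*t) + 1) := by positivity
  linarith

lemma xiFun_zero : xiFun 0 = 1/2 := by
  rw [xiFun, Real.tanh_zero]; norm_num

theorem bise_output_almost_binary {d : ℕ} (Ω : Finset (Fin d → ℤ))
    (W : (Fin d → ℤ) → ℝ) (hW : ∀ s ∈ Ω, W s ∈ Set.Icc (0 : ℝ) 1)
    (S : Finset (Fin d → ℤ)) (hSΩ : S ⊆ Ω) (hS : S.Nonempty)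
    (b u v p : ℝ) (hu : 0 ≤ u) (huv : u < v) (hv : v ≤ 1) (hp : 0 < p)
    (h1 : (∑ s ∈ Ω \ S, W s) + u * ∑ s ∈ S, W s ≤ b)
    (h2 : b < v * S.inf' hS W) :
    (∀ x : (Fin d → ℤ) → ℝ, (∀ j, x j ∈ Set.Icc (0 : ℝ) 1) →
        (∀ j, x j ≤ u ∨ v ≤ x j) →
        ∀ i, xiFun (p * ((∑ s ∈ Ω, W s * x (i - s)) - b)) ∈
          Set.Icc 0 (xiFun (p * ((∑ s ∈ Ω \ S, W s) + u * ∑ s ∈ S, W s - b))) ∪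
          Set.Icc (xiFun (p * (v * S.inf' hS W - b))) 1)
    ∧ 1 / 2 < xiFun (p * (v * S.inf' hS W - b))
    ∧ xiFun (p * ((∑ s ∈ Ω \ S, W s) + u * ∑ s ∈ S, W s - b)) ≤ 1 / 2 := by
  have hv0 : 0 < v := lt_of_le_of_lt hu huv
  refine ⟨?_, ?_, ?_⟩
  · intro x hx hbin i
    by_cases hcase : ∃ s ∈ S, v ≤ x (i - s)
    · -- pre-activation is large
      right
      obtain ⟨s0, hs0S, hs0⟩ := hcase
      refine ⟨xiFun_mono (by
        have key : v * S.inf' hS W ≤ ∑ s ∈ Ω, W s * x (i - s) := by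
          have h5 : W s0 * x (i - s0) ≤ ∑ s ∈ Ω, W s * x (i - s) := by
            apply Finset.single_le_sum (f := fun s => W s * x (i - s))
            · intro s hs
              exact mul_nonneg (hW s hs).1 (hx (i - s)).1
            · exact hSΩ hs0S
          have h6 : v * S.inf' hS W ≤ W s0 * x (i - s0) := by
            have hinf : S.inf' hS W ≤ W s0 := Finset.inf'_le W hs0S
            have hinf0 : 0 ≤ S.inf' hS W := by
              obtain ⟨t, htS, ht⟩ := Finset.exists_mem_eq_inf' hS W
              rw [ht]; exact (hW t (hSΩ htS)).1
            calc v * S.inf' hS W ≤ x (i - s0) * W s0 :=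
                  mul_le_mul hs0 hinf hinf0 (hx (i - s0)).1
              _ = W s0 * x (i - s0) := mul_comm _ _
          exact h6.trans h5
        nlinarith), xiFun_le_one _⟩
    · -- pre-activation is small
      left
      push_neg at hcase
      refine ⟨xiFun_nonneg _, xiFun_mono (by
        have key : ∑ s ∈ Ω, W s * x (i - s) ≤ (∑ s ∈ Ω \ S, W s) + u * ∑ s ∈ S, W s := by
          have hsplit : ∑ s ∈ Ω, W s * x (i - s)
              = (∑ s ∈ Ω \ S, W s * x (i - s)) + ∑ s ∈ S, W s * x (i - s) :=
            (Finset.sum_sdiff hSΩ).symm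
          have hA : ∑ s ∈ Ω \ S, W s * x (i - s) ≤ ∑ s ∈ Ω \ S, W s := by
            apply Finset.sum_le_sum
            intro s hs
            have hsΩ : s ∈ Ω := (Finset.mem_sdiff.1 hs).1
            calc W s * x (i - s) ≤ W s * 1 :=
                  mul_le_mul_of_nonneg_left (hx (i - s)).2 (hW s hsΩ).1
              _ = W s := mul_one _
          have hB : ∑ s ∈ S, W s * x (i - s) ≤ u * ∑ s ∈ S, W s := by
            rw [Finset.mul_sum]
            apply Finset.sum_le_sum
            intro s hs
            have hle : x (i - s) ≤ u := by
              rcases hbin (i - s) with h | h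
              · exact h
              · exact absurd h (not_le.2 (hcase s hs))
            calc W s * x (i - s) ≤ W s * u :=
                  mul_le_mul_of_nonneg_left hle (hW s (hSΩ hs)).1
              _ = u * W s := mul_comm _ _
          linarith
        nlinarith)⟩
  · rw [← xiFun_zero]
    apply xiFun_strictMono
    have : 0 < v * S.inf' hS W - b := by linarith
    positivity
  · rw [← xiFun_zero]
    apply xiFun_mono
    nlinarith
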